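/- Let X and Y be finite simple graphs with Y having n vertices, and suppose Y has no edges (Y = X_n). Then S_Y ≠ ∅ iff n ≥ 2 and T_Y = ∅ whenever n ≥ 2, so Sabidussi's condition for X ∘ X_n (the disjoint union of n copies of X, denoted nX) reduces to: Aut(nX) = Aut(X) ≀ S_n if and only if X is connected or n = 1. -/

import Mathlib

/-- The lexicographic product `X ∘ Y`: vertex set `X × Y`, with
`(i,α) ~ (j,β)` iff (`α = β` and `i ~_X j`) or `α ~_Y β`. -/
def lexProd {α β : Type*} (X : SimpleGraph α) (Y : SimpleGraph β) :
    SimpleGraph (α × β) where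
  Adj p q := (p.2 = q.2 ∧ X.Adj p.1 q.1) ∨ Y.Adj p.2 q.2
  symm := by
    constructor
    rintro ⟨i, a⟩ ⟨j, b⟩ (⟨h1, h2⟩ | h)
    · exact Or.inl ⟨h1.symm, h2.symm⟩
    · exact Or.inr h.symm
  loopless := by
    constructor
    rintro ⟨i, a⟩ (⟨-, h⟩ | h)
    · exact X.loopless.irrefl i h
    · exact Y.loopless.irrefl a h

/-- A permutation of the vertices is a graph automorphism if it preserves adjacency. -/
def IsGraphAut {α : Type*} (X : SimpleGraph α) (σ : Equiv.Perm α) : Prop :=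
  ∀ i j, X.Adj (σ i) (σ j) ↔ X.Adj i j

/-- The permutation `(i,a) ↦ (σ_a i, τ a)` of `α × β`. -/
def wreathMap {α β : Type*} (σ : β → Equiv.Perm α) (τ : Equiv.Perm β) :
    Equiv.Perm (α × β) where
  toFun p := (σ p.2 p.1, τ p.2)
  invFun q := ((σ (τ.symm q.2)).symm q.1, τ.symm q.2)
  left_inv := by rintro ⟨i, a⟩; simp
  right_inv := by rintro ⟨j, b⟩; simp

/-!
With an edgeless second factor, `X ∘ X_n` is the disjoint union of the layers `X × {a}`, and
an automorphism is a wreath map exactly when it maps layers onto layers. If `X` is connected the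
layers are the connected components, which every automorphism permutes; with a single layer
there is nothing to permute. If `X` is disconnected and there are two layers, exchanging the
two layers over one component of `X` only is an automorphism that splits a layer.
-/

section

open SimpleGraph

variable {α β : Type*}

lemma exists_ne_neighborSet_bot_eq_iff :
    (∃ y₀ y₁ : β, y₀ ≠ y₁ ∧
      (⊥ : SimpleGraph β).neighborSet y₀ = (⊥ : SimpleGraph β).neighborSet y₁) ↔
      Nontrivial β := by
  simp only [neighborSet_bot, and_true]
  exact nontrivial_iff.symm

lemma not_exists_ne_neighborSet_bot_union_singleton_eq :
    ¬ ∃ y₀ y₁ : β, y₀ ≠ y₁ ∧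
      (⊥ : SimpleGraph β).neighborSet y₀ ∪ {y₀} =
        (⊥ : SimpleGraph β).neighborSet y₁ ∪ {y₁} := by
  simp

@[simp]
lemma wreathMap_apply (σ : β → Equiv.Perm α) (τ : Equiv.Perm β) (p : α × β) :
    wreathMap σ τ p = (σ p.2 p.1, τ p.2) :=
  rfl

lemma lexProd_bot_adj (X : SimpleGraph α) {p q : α × β} :
    (lexProd X ⊥).Adj p q ↔ p.2 = q.2 ∧ X.Adj p.1 q.1 := by
  simp [lexProd]

lemma lexProd_bot_reachable_iff {X : SimpleGraph α} (hX : X.Preconnected) {p q : α × β} :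
    (lexProd X ⊥).Reachable p q ↔ p.2 = q.2 := by
  constructor
  · intro h
    rw [reachable_iff_reflTransGen] at h
    induction h with
    | refl => rfl
    | tail _ hadj ih => exact ih.trans ((lexProd_bot_adj X).mp hadj).1
  · obtain ⟨x, a⟩ := p
    obtain ⟨y, b⟩ := q
    rintro rfl
    exact (hX x y).map ⟨fun x => (x, a), fun h => Or.inl ⟨rfl, h⟩⟩

lemma IsGraphAut.reachable_iff {X : SimpleGraph α} {f : Equiv.Perm α} (hf : IsGraphAut X f)
    {u v : α} : X.Reachable (f u) (f v) ↔ X.Reachable u v :=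
  Iso.reachable_iff (φ := ⟨f, hf _ _⟩)

lemma IsGraphAut.snd_eq_iff_of_preconnected {X : SimpleGraph α} (hX : X.Preconnected)
    {f : Equiv.Perm (α × β)} (hf : IsGraphAut (lexProd X ⊥) f) (p q : α × β) :
    (f p).2 = (f q).2 ↔ p.2 = q.2 := by
  rw [← lexProd_bot_reachable_iff hX, ← lexProd_bot_reachable_iff hX, hf.reachable_iff]

lemma IsGraphAut.of_wreathMap {X : SimpleGraph α} {Y : SimpleGraph β}
    {σ : β → Equiv.Perm α} {τ : Equiv.Perm β} (h : IsGraphAut (lexProd X Y) (wreathMap σ τ))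
    (a : β) : IsGraphAut X (σ a) := fun i j => by
  simpa [lexProd] using h (i, a) (j, a)

lemma exists_eq_wreathMap [Nonempty α] {f : Equiv.Perm (α × β)}
    (hf : ∀ p q, (f p).2 = (f q).2 ↔ p.2 = q.2) : ∃ σ τ, f = wreathMap σ τ := by
  obtain ⟨x₀⟩ := ‹Nonempty α›
  have hf_symm : ∀ p q, (f.symm p).2 = (f.symm q).2 ↔ p.2 = q.2 := fun p q => by
    simpa using (hf (f.symm p) (f.symm q)).symm
  let τ : Equiv.Perm β :=
    { toFun a := (f (x₀, a)).2
      invFun b := (f.symm (x₀, b)).2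
      left_inv a := by simpa using (hf_symm (x₀, (f (x₀, a)).2) (f (x₀, a))).mpr rfl
      right_inv b := by simpa using (hf (x₀, (f.symm (x₀, b)).2) (f.symm (x₀, b))).mpr rfl }
  have hτ : ∀ p, (f p).2 = τ p.2 := fun p => (hf p (x₀, p.2)).mpr rfl
  have hτ_symm : ∀ q, (f.symm q).2 = τ.symm q.2 := fun q => (hf_symm q (x₀, q.2)).mpr rfl
  let σ (a : β) : Equiv.Perm α :=
    { toFun x := (f (x, a)).1
      invFun y := (f.symm (y, τ a)).1
      left_inv x := by simp [← hτ (x, a)]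
      right_inv y := by
        have : ((f.symm (y, τ a)).1, a) = f.symm (y, τ a) :=
          Prod.ext rfl (by simp [hτ_symm])
        simp [this] }
  exact ⟨σ, τ, Equiv.ext fun p => Prod.ext rfl (hτ p)⟩

lemma isGraphAut_prodShear_lexProd_bot {X : SimpleGraph α} {π : α → Equiv.Perm β}
    (hπ : ∀ x y, X.Adj x y → π x = π y) :
    IsGraphAut (lexProd X ⊥) (Equiv.prodShear (Equiv.refl α) π) := by
  rintro ⟨x, a⟩ ⟨y, b⟩
  simp only [lexProd_bot_adj, Equiv.prodShear_apply, Equiv.refl_apply]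
  constructor
  · rintro ⟨hab, hxy⟩
    rw [hπ x y hxy, (π y).apply_eq_iff_eq] at hab
    exact ⟨hab, hxy⟩
  · rintro ⟨rfl, hxy⟩
    exact ⟨by rw [hπ x y hxy], hxy⟩

lemma exists_isGraphAut_lexProd_bot_ne_wreathMap [Nontrivial β] {X : SimpleGraph α}
    (hX : ¬X.Preconnected) :
    ∃ f : Equiv.Perm (α × β), IsGraphAut (lexProd X ⊥) f ∧ ∀ σ τ, f ≠ wreathMap σ τ := by
  obtain ⟨u, v, huv⟩ : ∃ u v, ¬X.Reachable u v := by simpa [Preconnected] using hX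
  obtain ⟨c₀, c₁, hc⟩ := exists_pair_ne β
  classical
  let π (x : α) : Equiv.Perm β := if X.Reachable u x then Equiv.swap c₀ c₁ else 1
  have hπ : ∀ x y, X.Adj x y → π x = π y := fun x y hxy => by
    have : X.Reachable u x ↔ X.Reachable u y :=
      ⟨fun h => h.trans hxy.reachable, fun h => h.trans hxy.symm.reachable⟩
    simp only [π, this]
  refine ⟨_, isGraphAut_prodShear_lexProd_bot hπ, fun σ τ hστ => hc ?_⟩
  have hu : τ c₀ = c₁ := by
    simpa [π] using (congrArg Prod.snd (Equiv.ext_iff.mp hστ (u, c₀))).symm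
  have hv : τ c₀ = c₀ := by
    simpa [π, huv] using (congrArg Prod.snd (Equiv.ext_iff.mp hστ (v, c₀))).symm
  exact hv.symm.trans hu

theorem forall_isGraphAut_lexProd_bot_eq_wreathMap_iff [Nonempty α] (X : SimpleGraph α) :
    (∀ f : Equiv.Perm (α × β), IsGraphAut (lexProd X ⊥) f →
      ∃ (σ : β → Equiv.Perm α) (τ : Equiv.Perm β),
        (∀ a, IsGraphAut X (σ a)) ∧ f = wreathMap σ τ) ↔
      X.Preconnected ∨ Subsingleton β := by
  constructor
  · intro H
    by_contra! h
    obtain ⟨hX, hβ⟩ := h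
    obtain ⟨f, hf, hf_ne⟩ := exists_isGraphAut_lexProd_bot_ne_wreathMap (β := β) hX
    obtain ⟨σ, τ, -, rfl⟩ := H f hf
    exact hf_ne σ τ rfl
  · intro h f hf
    have hsnd : ∀ p q, (f p).2 = (f q).2 ↔ p.2 = q.2 := by
      rcases h with hX | hβ
      · exact hf.snd_eq_iff_of_preconnected hX
      · exact fun _ _ => iff_of_true (Subsingleton.elim _ _) (Subsingleton.elim _ _)
    obtain ⟨σ, τ, rfl⟩ := exists_eq_wreathMap hsnd
    exact ⟨σ, τ, hf.of_wreathMap, rfl⟩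

end

theorem sabidussi_edgeless_general {α : Type*} [Nonempty α]
    (X : SimpleGraph α) (n : ℕ) (hn : 0 < n) :
    ((∃ y₀ y₁ : Fin n, y₀ ≠ y₁ ∧
        (⊥ : SimpleGraph (Fin n)).neighborSet y₀ =
          (⊥ : SimpleGraph (Fin n)).neighborSet y₁) ↔ 2 ≤ n) ∧
    (2 ≤ n → ¬ ∃ y₀ y₁ : Fin n, y₀ ≠ y₁ ∧
        (⊥ : SimpleGraph (Fin n)).neighborSet y₀ ∪ {y₀} =
          (⊥ : SimpleGraph (Fin n)).neighborSet y₁ ∪ {y₁}) ∧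
    ((∀ f : Equiv.Perm (α × Fin n),
        IsGraphAut (lexProd X (⊥ : SimpleGraph (Fin n))) f →
          ∃ (σ : Fin n → Equiv.Perm α) (τ : Equiv.Perm (Fin n)),
            (∀ a, IsGraphAut X (σ a)) ∧ f = wreathMap σ τ) ↔
      (X.Connected ∨ n = 1)) := by
  refine ⟨exists_ne_neighborSet_bot_eq_iff.trans Fin.nontrivial_iff_two_le,
    fun _ => not_exists_ne_neighborSet_bot_union_singleton_eq, ?_⟩
  rw [forall_isGraphAut_lexProd_bot_eq_wreathMap_iff, X.connected_iff,
    and_iff_left ‹Nonempty α›, Fin.subsingleton_iff_le_one, show n ≤ 1 ↔ n = 1 by omega]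

/-- For the edgeless graph `X_n = ⊥` on `n ≥ 1` vertices:
`S_{X_n} ≠ ∅` iff `n ≥ 2`; `T_{X_n} = ∅` whenever `n ≥ 2`; and Sabidussi's condition
for `X ∘ X_n ≅ nX` reduces to: `Aut(nX) = Aut(X) ≀ S_n` if and only if `X` is
connected or `n = 1` (for `X` with at least one vertex). -/
theorem sabidussi_edgeless {α : Type*} [Fintype α] [Nonempty α]
    (X : SimpleGraph α) (n : ℕ) (hn : 0 < n) :
    ((∃ y₀ y₁ : Fin n, y₀ ≠ y₁ ∧
        (⊥ : SimpleGraph (Fin n)).neighborSet y₀ =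
          (⊥ : SimpleGraph (Fin n)).neighborSet y₁) ↔ 2 ≤ n) ∧
    (2 ≤ n → ¬ ∃ y₀ y₁ : Fin n, y₀ ≠ y₁ ∧
        (⊥ : SimpleGraph (Fin n)).neighborSet y₀ ∪ {y₀} =
          (⊥ : SimpleGraph (Fin n)).neighborSet y₁ ∪ {y₁}) ∧
    ((∀ f : Equiv.Perm (α × Fin n),
        IsGraphAut (lexProd X (⊥ : SimpleGraph (Fin n))) f →
          ∃ (σ : Fin n → Equiv.Perm α) (τ : Equiv.Perm (Fin n)),
            (∀ a, IsGraphAut X (σ a)) ∧ f = wreathMap σ τ) ↔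
      (X.Connected ∨ n = 1)) :=
  sabidussi_edgeless_general X n hn
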